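/- Let r ∈ ℕ (r ≥ 1) and k ∈ ℤ with 0 ≤ k ≤ r, and suppose Assumption A1 holds. Then the mapping ψ ↦ Σ_{i=0}^{⌊(k−1)/2⌋−1} ‖ψ^{(i)}(-1)‖ + Σ_{i=0}^{⌊k/2⌋−1} ‖ψ^{(i)}(1)‖ + Σ_{i=δ_{0,k}}^{r−k} ‖Î[ψ(t̂)·(1+t̂)^i]‖ defines a norm on the space P_{r−1}([-1,1], ℝ^d), where ‖·‖ denotes the Euclidean norm on ℝ^d and empty sums are zero. -/

import Mathlib

open Set MeasureTheory
open scoped BigOperators RealInnerProductSpace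

noncomputable section

/-- `ℝ^d` with the Euclidean norm. -/
abbrev Vec (d : ℕ) := EuclideanSpace ℝ (Fin d)

/-- `φ : ℝ → ℝ` is (the evaluation of) a polynomial of degree at most `s`
(`s : ℤ`; for `s < 0` this means the zero function). -/
def IsPolyR (s : ℤ) (φ : ℝ → ℝ) : Prop :=
  ∃ p : Polynomial ℝ, (∀ n : ℕ, s < (n : ℤ) → p.coeff n = 0) ∧ ∀ x : ℝ, φ x = p.eval x

/-- Vector-valued polynomials of degree at most `s`, componentwise. -/
def IsPolyV {d : ℕ} (s : ℤ) (φ : ℝ → Vec d) : Prop :=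
  ∀ i : Fin d, IsPolyR s fun x => φ x i

/-- Componentwise application of a (reference) integrator to a vector-valued function. -/
def vecI {d : ℕ} (Ih : (ℝ → ℝ) →ₗ[ℝ] ℝ) (φ : ℝ → Vec d) : Vec d :=
  WithLp.toLp 2 fun i => Ih fun x => φ x i

/-- Componentwise application of a (reference) approximation operator. -/
def vecOp {d : ℕ} (Ic : (ℝ → ℝ) →ₗ[ℝ] (ℝ → ℝ)) (φ : ℝ → Vec d) : ℝ → Vec d :=
  fun x => WithLp.toLp 2 fun i => Ic (fun y => φ y i) x

/-- Affine map of the reference interval `(-1,1]` onto `(a,b]`. -/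
def Tmap (a b x : ℝ) : ℝ := (a + b) / 2 + (b - a) / 2 * x

/-- Inverse of `Tmap a b`. -/
def Tinv (a b x : ℝ) : ℝ := (2 * x - (a + b)) / (b - a)

/-- Local (vector-valued) integrator `I_n` on `(a,b]`. -/
def locI {d : ℕ} (Ih : (ℝ → ℝ) →ₗ[ℝ] ℝ) (a b : ℝ) (φ : ℝ → Vec d) : Vec d :=
  ((b - a) / 2) • vecI Ih (φ ∘ Tmap a b)

/-- Local scalar integrator on `(a,b]`. -/
def locIs (Ih : (ℝ → ℝ) →ₗ[ℝ] ℝ) (a b : ℝ) (g : ℝ → ℝ) : ℝ :=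
  (b - a) / 2 * Ih (g ∘ Tmap a b)

/-- Local approximation operator `ℐ_n` on `(a,b]` (vector-valued). -/
def locOp {d : ℕ} (Ic : (ℝ → ℝ) →ₗ[ℝ] (ℝ → ℝ)) (a b : ℝ) (φ : ℝ → Vec d) : ℝ → Vec d :=
  fun x => vecOp Ic (φ ∘ Tmap a b) (Tinv a b x)

/-- Local approximation operator `ℐ_n` on `(a,b]` (scalar). -/
def locOpR (Ic : (ℝ → ℝ) →ₗ[ℝ] (ℝ → ℝ)) (a b : ℝ) (φ : ℝ → ℝ) : ℝ → ℝ :=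
  fun x => Ic (φ ∘ Tmap a b) (Tinv a b x)

/-- Supremum of the (Euclidean) norm over a set of times. -/
def supNorm {d : ℕ} (s : Set ℝ) (φ : ℝ → Vec d) : ℝ := ⨆ x : s, ‖φ (x : ℝ)‖

/-- Supremum of the absolute value over a set of times. -/
def supAbs (s : Set ℝ) (g : ℝ → ℝ) : ℝ := ⨆ x : s, |g (x : ℝ)|

/-- `k_𝒥 = max{⌊k/2⌋ − 1, k_𝓘, k_ℐ}`. -/
def kJ (k : ℤ) (kI kIc : ℕ) : ℕ := max (max (k.fdiv 2 - 1).toNat kI) kIc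

/-- Assumption A1 on the reference integrator. -/
def AssumptionA1 (Ih : (ℝ → ℝ) →ₗ[ℝ] ℝ) (r k : ℤ) : Prop :=
  ∀ ψ : ℝ → ℝ, IsPolyR (r - max 1 k) ψ →
    (∀ φ : ℝ → ℝ, IsPolyR (r - max 1 k) φ →
      Ih (fun x => (1 - x) ^ (k.fdiv 2).toNat * (1 + x) ^ ((k - 1).fdiv 2).natAbs *
        (ψ x * φ x)) = 0) →
    ∀ x : ℝ, ψ x = 0

/-- Assumption A2 on the reference integrator. -/
def AssumptionA2 (d : ℕ) (Ih : (ℝ → ℝ) →ₗ[ℝ] ℝ) (kI : ℕ) (C0 : ℝ) : Prop :=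
  ∀ φ : ℝ → Vec d, ContDiffOn ℝ (kI : ℕ∞) φ (Icc (-1 : ℝ) 1) →
    ‖vecI Ih φ‖ ≤ C0 * ∑ j ∈ Finset.range (kI + 1),
      supNorm (Icc (-1 : ℝ) 1) (iteratedDerivWithin j φ (Icc (-1 : ℝ) 1))

/-- Assumption A3 on the reference approximation operator. -/
def AssumptionA3 (d : ℕ) (Ic : (ℝ → ℝ) →ₗ[ℝ] (ℝ → ℝ)) (kI kIc : ℕ) (C1 : ℝ) : Prop :=
  ∀ l : ℕ, l ≤ kI → ∀ φ : ℝ → Vec d,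
    ContDiffOn ℝ ((max kIc l : ℕ) : ℕ∞) φ (Icc (-1 : ℝ) 1) →
    supNorm (Icc (-1 : ℝ) 1) (iteratedDerivWithin l (vecOp Ic φ) (Icc (-1 : ℝ) 1)) ≤
      C1 * ∑ j ∈ Finset.range (max kIc l + 1),
        supNorm (Icc (-1 : ℝ) 1) (iteratedDerivWithin j φ (Icc (-1 : ℝ) 1))

/-- Assumption A4, with smoothness level `m` playing the role of `k_𝒥`. -/
def AssumptionA4 (d : ℕ) (f : ℝ → Vec d → Vec d) (t0 T C2 : ℝ) (m : ℕ) : Prop :=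
  ∀ i : ℕ, i ≤ m → ∀ v w : ℝ → Vec d, ContDiff ℝ (⊤ : ℕ∞) v → ContDiff ℝ (⊤ : ℕ∞) w →
    ∀ᵐ s ∂(volume.restrict (Icc t0 (t0 + T))),
      ‖iteratedDeriv i (fun x => f x (v x) - f x (w x)) s‖ ≤
        C2 * ∑ l ∈ Finset.range (i + 1), ‖iteratedDeriv l (fun x => v x - w x) s‖

/-- Assumption A5a, stated for all local intervals. -/
def AssumptionA5a (d : ℕ) (Ic : (ℝ → ℝ) →ₗ[ℝ] (ℝ → ℝ)) (kI kIc : ℕ)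
    (K : ℕ) (th : Fin (K + 1) → ℝ) (Kt : Fin (K + 1) → ℕ) (C11 C12 : ℝ) : Prop :=
  Function.Injective th ∧ (∀ m, th m ∈ Icc (-1 : ℝ) 1) ∧
  ∀ a b : ℝ, a < b → b - a ≤ 1 → ∀ l : ℕ, l ≤ kI →
    ∀ φ : ℝ → Vec d, ContDiffOn ℝ (kIc : ℕ∞) φ (Icc a b) →
      ContDiffOn ℝ (l : ℕ∞) (locOp Ic a b φ) (Icc a b) ∧
      ((b - a) / 2) ^ l *
          supNorm (Ioc a b) (iteratedDerivWithin l (locOp Ic a b φ) (Icc a b)) ≤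
        C11 * ∑ m : Fin (K + 1), ∑ j ∈ Finset.range (Kt m + 1),
            ((b - a) / 2) ^ j *
              ‖iteratedDerivWithin j φ (Icc a b) (Tmap a b (th m))‖ +
        C12 * supNorm (Ioc a b) φ

/-- The conditions defining `Ĵ v` on the reference interval. -/
def JCondRef (Ih : (ℝ → ℝ) →ₗ[ℝ] ℝ) (Ic : (ℝ → ℝ) →ₗ[ℝ] (ℝ → ℝ)) (r k : ℤ)
    (v w : ℝ → ℝ) : Prop :=
  IsPolyR r w ∧
  (1 ≤ k → ∀ i : ℕ, (i : ℤ) ≤ (k - 1).fdiv 2 →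
    iteratedDeriv i w (-1) = iteratedDerivWithin i v (Icc (-1 : ℝ) 1) (-1)) ∧
  (2 ≤ k → ∀ i : ℕ, 1 ≤ i → (i : ℤ) ≤ k.fdiv 2 →
    iteratedDeriv i w 1 = iteratedDerivWithin i v (Icc (-1 : ℝ) 1) 1) ∧
  (∀ φ : ℝ → ℝ, IsPolyR (r - k) φ →
    Ih (fun x => deriv w x * φ x) + (if k = 0 then w (-1) * φ (-1) else 0) =
    Ih (fun x => Ic (derivWithin v (Icc (-1 : ℝ) 1)) x * φ x) +
      (if k = 0 then v (-1) * φ (-1) else 0))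

/-- The conditions defining the local approximation `J_n v` on `(a,b]`. -/
def JCondLoc (d : ℕ) (Ih : (ℝ → ℝ) →ₗ[ℝ] ℝ) (Ic : (ℝ → ℝ) →ₗ[ℝ] (ℝ → ℝ)) (r k : ℤ)
    (a b : ℝ) (v w : ℝ → Vec d) : Prop :=
  IsPolyV r w ∧
  (1 ≤ k → ∀ i : ℕ, (i : ℤ) ≤ (k - 1).fdiv 2 →
    iteratedDeriv i w a = iteratedDerivWithin i v (Icc a b) a) ∧
  (2 ≤ k → ∀ i : ℕ, 1 ≤ i → (i : ℤ) ≤ k.fdiv 2 →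
    iteratedDeriv i w b = iteratedDerivWithin i v (Icc a b) b) ∧
  (∀ φ : ℝ → Vec d, IsPolyV (r - k) φ →
    locIs Ih a b (fun x => ⟪deriv w x, φ x⟫) +
        (if k = 0 then ⟪w a, φ a⟫ else 0) =
      locIs Ih a b (fun x => ⟪locOp Ic a b (derivWithin v (Icc a b)) x, φ x⟫) +
        (if k = 0 then ⟪v a, φ a⟫ else 0))

/-- The conditions defining `P̂ v` on the reference interval. -/
def PCondRef (Ih : (ℝ → ℝ) →ₗ[ℝ] ℝ) (Ic : (ℝ → ℝ) →ₗ[ℝ] (ℝ → ℝ)) (r k : ℤ)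
    (v w : ℝ → ℝ) : Prop :=
  IsPolyR (r - 1) w ∧
  (3 ≤ k → ∀ i : ℕ, (i : ℤ) ≤ (k - 1).fdiv 2 - 1 →
    iteratedDeriv i w (-1) = iteratedDerivWithin i v (Icc (-1 : ℝ) 1) (-1)) ∧
  (2 ≤ k → ∀ i : ℕ, (i : ℤ) ≤ k.fdiv 2 - 1 →
    iteratedDeriv i w 1 = iteratedDerivWithin i v (Icc (-1 : ℝ) 1) 1) ∧
  (∀ φ : ℝ → ℝ, IsPolyR (r - k) φ → (k = 0 → φ (-1) = 0) →
    Ih (fun x => w x * φ x) = Ih (fun x => Ic v x * φ x))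

/-- The conditions defining the local approximation `P_n v` on `(a,b]`. -/
def PCondLoc (d : ℕ) (Ih : (ℝ → ℝ) →ₗ[ℝ] ℝ) (Ic : (ℝ → ℝ) →ₗ[ℝ] (ℝ → ℝ)) (r k : ℤ)
    (a b : ℝ) (v w : ℝ → Vec d) : Prop :=
  IsPolyV (r - 1) w ∧
  (3 ≤ k → ∀ i : ℕ, (i : ℤ) ≤ (k - 1).fdiv 2 - 1 →
    iteratedDeriv i w a = iteratedDerivWithin i v (Icc a b) a) ∧
  (2 ≤ k → ∀ i : ℕ, (i : ℤ) ≤ k.fdiv 2 - 1 →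
    iteratedDeriv i w b = iteratedDerivWithin i v (Icc a b) b) ∧
  (∀ φ : ℝ → Vec d, IsPolyV (r - k) φ → (k = 0 → φ a = 0) →
    locIs Ih a b (fun x => ⟪w x, φ x⟫) =
      locIs Ih a b (fun x => ⟪locOp Ic a b v x, φ x⟫))

/-- The local variational time discretization problem on `(a,b]` with incoming value `Uprev`. -/
def LocalVTD (d : ℕ) (Ih : (ℝ → ℝ) →ₗ[ℝ] ℝ) (Ic : (ℝ → ℝ) →ₗ[ℝ] (ℝ → ℝ)) (r k : ℤ)
    (a b : ℝ) (f : ℝ → Vec d → Vec d) (Uprev : Vec d) (U : ℝ → Vec d) : Prop :=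
  IsPolyV r U ∧
  (1 ≤ k → U a = Uprev) ∧
  (2 ≤ k → ∀ i : ℕ, (i : ℤ) ≤ k.fdiv 2 - 1 →
    iteratedDeriv (i + 1) U b = iteratedDeriv i (fun s => f s (U s)) b) ∧
  (3 ≤ k → ∀ i : ℕ, (i : ℤ) ≤ (k - 1).fdiv 2 - 1 →
    iteratedDeriv (i + 1) U a = iteratedDeriv i (fun s => f s (U s)) a) ∧
  (∀ φ : ℝ → Vec d, IsPolyV (r - k) φ →
    locIs Ih a b (fun s => ⟪deriv U s, φ s⟫) +
        (if k = 0 then ⟪U a - Uprev, φ a⟫ else 0) =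
      locIs Ih a b (fun s => ⟪locOp Ic a b (fun x => f x (U x)) s, φ s⟫))

/-- The global discrete solution of the variational time discretization:
`P n` is the local polynomial on `I_n = (t_{n-1}, t_n]`. -/
def IsVTDSolution (d : ℕ) (Ih : (ℝ → ℝ) →ₗ[ℝ] ℝ) (Ic : (ℝ → ℝ) →ₗ[ℝ] (ℝ → ℝ))
    (r k : ℤ) (t : ℕ → ℝ) (N : ℕ) (f : ℝ → Vec d → Vec d) (u0 : Vec d)
    (P : ℕ → ℝ → Vec d) : Prop :=
  ∀ n : ℕ, 1 ≤ n → n ≤ N →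
    LocalVTD d Ih Ic r k (t (n - 1)) (t n) f
      (if n = 1 then u0 else P (n - 1) (t (n - 1))) (P n)

/-- Exactness of the local integrator on polynomials of degree at most `ρ`. -/
def QuadExact (Ih : (ℝ → ℝ) →ₗ[ℝ] ℝ) (a b : ℝ) (ρ : ℤ) : Prop :=
  ∀ φ : ℝ → ℝ, IsPolyR ρ φ → (∫ x in Ioc a b, φ x) = locIs Ih a b φ

/-- `I_n[φ ψ] = I_n[(ℐ_n φ) ψ]` for all `φ ∈ P_ρ` and `ψ ∈ P_i` (the property defining
`r^𝓘_{ℐ,i}`). -/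
def QuadInterpExact (Ih : (ℝ → ℝ) →ₗ[ℝ] ℝ) (Ic : (ℝ → ℝ) →ₗ[ℝ] (ℝ → ℝ))
    (a b : ℝ) (ρ : ℤ) (i : ℕ) : Prop :=
  ∀ φ : ℝ → ℝ, IsPolyR ρ φ → ∀ ψ : ℝ → ℝ, IsPolyR (i : ℤ) ψ →
    locIs Ih a b (fun x => φ x * ψ x) = locIs Ih a b (fun x => locOpR Ic a b φ x * ψ x)

/-- The defining interpolation conditions of the Hermite-type operator `𝓘ᵃᵖᵖ_n` on `(a,b]`. -/
def IsIapp (d : ℕ) (k : ℤ) (K : ℕ) (th : Fin (K + 1) → ℝ) (Kt : Fin (K + 1) → ℕ)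
    (a b : ℝ) (R : ℕ) (J : (ℝ → Vec d) → (ℝ → Vec d)) : Prop :=
  ∀ φ : ℝ → Vec d, ContDiff ℝ (⊤ : ℕ∞) φ →
    IsPolyV (R : ℤ) (J φ) ∧
    (∀ l : ℕ, (l : ℤ) ≤ k.fdiv 2 - 1 → iteratedDeriv l (J φ) b = iteratedDeriv l φ b) ∧
    (∀ l : ℕ, (l : ℤ) ≤ (k - 1).fdiv 2 - 1 →
      iteratedDeriv l (J φ) a = iteratedDeriv l φ a) ∧
    (∀ m : Fin (K + 1), ∀ l : ℕ, l ≤ Kt m →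
      iteratedDeriv l (J φ) (Tmap a b (th m)) = iteratedDeriv l φ (Tmap a b (th m)))

/-- Composition `ℐ¹ ∘ ⋯ ∘ ℐˡ` of a finite family of operators. -/
def compOps (l : ℕ) (Ops : Fin l → ((ℝ → ℝ) →ₗ[ℝ] (ℝ → ℝ))) : (ℝ → ℝ) → (ℝ → ℝ) :=
  (List.ofFn (fun j : Fin l => (Ops j : (ℝ → ℝ) → (ℝ → ℝ)))).foldr (· ∘ ·) id

/-- The candidate norm of Lemma 3.2 on `P_{r-1}([-1,1], ℝ^d)`. -/
def refNormMap (d : ℕ) (Ih : (ℝ → ℝ) →ₗ[ℝ] ℝ) (r k : ℤ) (ψ : ℝ → Vec d) : ℝ :=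
  ∑ i ∈ Finset.range ((k - 1).fdiv 2).toNat, ‖iteratedDeriv i ψ (-1)‖ +
  ∑ i ∈ Finset.range (k.fdiv 2).toNat, ‖iteratedDeriv i ψ 1‖ +
  ∑ i ∈ Finset.Icc (if k = 0 then 1 else 0) (r - k).toNat,
    ‖vecI Ih (fun x => (1 + x) ^ i • ψ x)‖

/-!
Every term of `refNormMap` is the norm of a linear function of `ψ` (an iterated derivative at
an endpoint, or a moment `Î[(1 + x)ⁱ ψ]`), so it is a seminorm on smooth functions. For
definiteness, work with one component `p ∈ P_{r-1}` at a time. The vanishing derivatives at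
`∓1` give `p = (x + 1)ᵃ (x - 1)ᵇ q` with `a = ⌊(k-1)/2⌋`, `b = ⌊k/2⌋` and
`deg q ≤ r - max{1, k}`. Expanding a test function `φ ∈ P_{r - max{1,k}}` in powers of
`1 + x`, the vanishing moments `Î[(1 + x)ⁱ p]`, `δ_{0,k} ≤ i ≤ r - k`, give exactly the
orthogonality relations of Assumption A1 for `q`, hence `q = 0`.
-/

open Polynomial
open scoped ContDiff

namespace Polynomial

variable {𝕜 : Type*} [NontriviallyNormedField 𝕜]

theorem iteratedDeriv_eval (p : 𝕜[X]) (n : ℕ) :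
    iteratedDeriv n (fun x => p.eval x) = fun x => (derivative^[n] p).eval x := by
  induction n with
  | zero => simp
  | succ n ih =>
    ext x
    rw [iteratedDeriv_succ, ih, Function.iterate_succ_apply', Polynomial.deriv]

theorem X_sub_C_pow_dvd_of_iterate_derivative_eval_eq_zero {R : Type*} [CommRing R] [IsDomain R]
    [CharZero R] {p : R[X]} {t : R} {n : ℕ}
    (h : ∀ m < n, (derivative^[m] p).eval t = 0) : (X - C t) ^ n ∣ p := by
  rcases eq_or_ne p 0 with rfl | hp
  · exact dvd_zero _
  cases n with
  | zero => simp
  | succ n =>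
    have hn : n < p.rootMultiplicity t :=
      lt_rootMultiplicity_of_isRoot_iterate_derivative hp fun m hm => h m (by omega)
    exact (pow_dvd_pow _ hn).trans (p.pow_rootMultiplicity_dvd t)

theorem exists_factor_of_iterate_derivative_eval_eq_zero {K : Type*} [Field K] [CharZero K]
    {p : K[X]} {s t : K} (hst : s ≠ t) {a b m : ℕ} (hdeg : p.natDegree ≤ a + b + m)
    (hs : ∀ i < a, (derivative^[i] p).eval s = 0) (ht : ∀ i < b, (derivative^[i] p).eval t = 0) :
    ∃ q : K[X], q.natDegree ≤ m ∧ p = (X - C s) ^ a * (X - C t) ^ b * q := by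
  obtain ⟨q, rfl⟩ := (isCoprime_X_sub_C_of_isUnit_sub (sub_ne_zero.mpr hst).isUnit).pow.mul_dvd
    (X_sub_C_pow_dvd_of_iterate_derivative_eval_eq_zero hs)
    (X_sub_C_pow_dvd_of_iterate_derivative_eval_eq_zero ht)
  refine ⟨q, ?_, rfl⟩
  rcases eq_or_ne q 0 with rfl | hq
  · simp
  have hsa := pow_ne_zero a (X_sub_C_ne_zero s)
  have htb := pow_ne_zero b (X_sub_C_ne_zero t)
  rw [natDegree_mul (mul_ne_zero hsa htb) hq, natDegree_mul hsa htb, natDegree_pow, natDegree_pow,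
    natDegree_X_sub_C, natDegree_X_sub_C] at hdeg
  omega

end Polynomial

theorem ContinuousLinearMap.iteratedDeriv_comp_left {𝕜 F G : Type*} [NontriviallyNormedField 𝕜]
    [NormedAddCommGroup F] [NormedSpace 𝕜 F] [NormedAddCommGroup G] [NormedSpace 𝕜 G]
    (g : F →L[𝕜] G) {f : 𝕜 → F} {x : 𝕜} {n : ℕ} (hf : ContDiffAt 𝕜 n f x) :
    iteratedDeriv n (g ∘ f) x = g (iteratedDeriv n f x) := by
  simp only [iteratedDeriv_eq_iteratedFDeriv, g.iteratedFDeriv_comp_left hf le_rfl]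
  rfl

theorem isPolyR_natCast_iff {n : ℕ} {φ : ℝ → ℝ} :
    IsPolyR n φ ↔ ∃ p : ℝ[X], p.natDegree ≤ n ∧ ∀ x, φ x = p.eval x := by
  refine ⟨fun ⟨p, hc, hp⟩ => ⟨p, natDegree_le_iff_coeff_eq_zero.mpr fun m hm => hc m ?_, hp⟩,
    fun ⟨p, hdeg, hp⟩ => ⟨p, fun m hm => coeff_eq_zero_of_natDegree_lt ?_, hp⟩⟩
  · exact_mod_cast hm
  · exact hdeg.trans_lt (by exact_mod_cast hm)

theorem IsPolyR.exists_eq_sum_one_add_pow {n : ℕ} {φ : ℝ → ℝ} (hφ : IsPolyR n φ) :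
    ∃ c : ℕ → ℝ, ∀ x, φ x = ∑ j ∈ Finset.range (n + 1), c j * (1 + x) ^ j := by
  obtain ⟨p, hdeg, hp⟩ := isPolyR_natCast_iff.mp hφ
  refine ⟨(taylor (-1) p).coeff, fun x => ?_⟩
  rw [hp, ← eval_eq_sum_range' ((natDegree_taylor p (-1)).trans_lt (Nat.lt_succ_of_le hdeg)),
    taylor_eval, add_neg_cancel_comm]

theorem map_mul_eq_zero_of_isPolyR (L : (ℝ → ℝ) →ₗ[ℝ] ℝ) {g φ : ℝ → ℝ} {n : ℕ}
    (hg : ∀ j ≤ n, L (fun x => (1 + x) ^ j * g x) = 0) (hφ : IsPolyR n φ) :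
    L (fun x => g x * φ x) = 0 := by
  obtain ⟨c, hc⟩ := hφ.exists_eq_sum_one_add_pow
  have hsum : (fun x => g x * φ x) =
      ∑ j ∈ Finset.range (n + 1), c j • fun x => (1 + x) ^ j * g x := by
    ext x
    simp only [hc, Finset.mul_sum, Finset.sum_apply, Pi.smul_apply, smul_eq_mul]
    exact Finset.sum_congr rfl fun j _ => by ring
  rw [hsum, map_sum]
  exact Finset.sum_eq_zero fun j hj => by
    rw [map_smul, hg j (Nat.lt_succ_iff.mp (Finset.mem_range.mp hj)), smul_zero]

theorem eq_zero_of_assumptionA1 {Ih : (ℝ → ℝ) →ₗ[ℝ] ℝ} {r k : ℤ} (hr : 1 ≤ r) (h0k : 0 ≤ k)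
    (hkr : k ≤ r) (hA1 : AssumptionA1 Ih r k) {p : ℝ[X]} (hdeg : p.natDegree ≤ (r - 1).toNat)
    (hleft : ∀ i < ((k - 1).fdiv 2).toNat, (derivative^[i] p).eval (-1) = 0)
    (hright : ∀ i < (k.fdiv 2).toNat, (derivative^[i] p).eval 1 = 0)
    (hmoments : ∀ i ∈ Finset.Icc (if k = 0 then 1 else 0) (r - k).toNat,
      Ih (fun x => (1 + x) ^ i * p.eval x) = 0) :
    p = 0 := by
  set a := ((k - 1).fdiv 2).toNat
  set b := (k.fdiv 2).toNat
  set δ := if k = 0 then 1 else 0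
  set D := (r - max 1 k).toNat
  have e1 : (k - 1).fdiv 2 = (k - 1) / 2 := Int.fdiv_eq_ediv_of_nonneg _ (by norm_num)
  have e2 : k.fdiv 2 = k / 2 := Int.fdiv_eq_ediv_of_nonneg _ (by norm_num)
  have hδ : (k = 0 ∧ δ = 1) ∨ (k ≠ 0 ∧ δ = 0) := by by_cases hk : k = 0 <;> simp [δ, hk]
  -- for `k = 0` the exponent `|⌊(k-1)/2⌋| = 1` of `(1 + x)` in A1 is the extra factor `(1 + x) ^ δ`
  have habs : ((k - 1).fdiv 2).natAbs = a + δ := by omega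
  have hdegsum : (r - 1).toNat = a + b + D := by omega
  have hD : r - max 1 k = D := by omega
  obtain ⟨q, hqdeg, rfl⟩ :=
    exists_factor_of_iterate_derivative_eval_eq_zero (by norm_num) (hdeg.trans_eq hdegsum)
      hleft hright
  suffices hq : q = 0 by rw [hq, mul_zero]
  refine Polynomial.funext fun x => ?_
  rw [eval_zero]
  refine hA1 (fun x => q.eval x) (hD ▸ isPolyR_natCast_iff.mpr ⟨q, hqdeg, fun _ => rfl⟩)
    (fun φ hφ => ?_) x
  have hsplit : (fun x => (1 - x) ^ b * (1 + x) ^ ((k - 1).fdiv 2).natAbs * (q.eval x * φ x)) =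
      (-1 : ℝ) ^ b • fun x =>
        ((1 + x) ^ δ * ((X - C (-1)) ^ a * (X - C 1) ^ b * q).eval x) * φ x := by
    ext x
    simp only [habs, Pi.smul_apply, smul_eq_mul, eval_mul, eval_pow, eval_sub, eval_X, eval_C]
    rw [show 1 - x = -1 * (x - 1) by ring, mul_pow]
    ring
  rw [hsplit, map_smul, map_mul_eq_zero_of_isPolyR Ih (n := D) (fun j hj => ?_) (hD ▸ hφ),
    smul_zero]
  rw [← hmoments (δ + j) (Finset.mem_Icc.mpr ⟨by omega, by omega⟩)]
  congr 1
  ext x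
  ring

theorem EuclideanSpace.iteratedDeriv_apply {𝕜 ι : Type*} [RCLike 𝕜] [Fintype ι]
    {ψ : 𝕜 → EuclideanSpace 𝕜 ι} {x : 𝕜} {n : ℕ} (hψ : ContDiffAt 𝕜 n ψ x) (j : ι) :
    iteratedDeriv n ψ x j = iteratedDeriv n (fun y => ψ y j) x :=
  ((EuclideanSpace.proj j).iteratedDeriv_comp_left hψ).symm

theorem IsPolyV.contDiff {d : ℕ} {s : ℤ} {ψ : ℝ → Vec d} (hψ : IsPolyV s ψ) {n : WithTop ℕ∞} :
    ContDiff ℝ n ψ :=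
  contDiff_euclidean.mpr fun j => by
    obtain ⟨p, -, hp⟩ := hψ j
    simpa [funext hp] using p.contDiff_aeval (R := ℝ) (𝕜 := ℝ) n

theorem vecI_add {d : ℕ} (Ih : (ℝ → ℝ) →ₗ[ℝ] ℝ) (φ χ : ℝ → Vec d) :
    vecI Ih (φ + χ) = vecI Ih φ + vecI Ih χ := by
  ext j
  exact map_add Ih _ _

theorem vecI_smul {d : ℕ} (Ih : (ℝ → ℝ) →ₗ[ℝ] ℝ) (c : ℝ) (φ : ℝ → Vec d) :
    vecI Ih (c • φ) = c • vecI Ih φ := by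
  ext j
  exact map_smul Ih _ _

section refNormMap

variable {d : ℕ} {Ih : (ℝ → ℝ) →ₗ[ℝ] ℝ} {r k : ℤ}

theorem refNormMap_nonneg (ψ : ℝ → Vec d) : 0 ≤ refNormMap d Ih r k ψ := by
  unfold refNormMap
  positivity

theorem refNormMap_smul (c : ℝ) (ψ : ℝ → Vec d) :
    refNormMap d Ih r k (c • ψ) = |c| * refNormMap d Ih r k ψ := by
  have hmoment : ∀ i : ℕ, vecI Ih (fun x => (1 + x) ^ i • (c • ψ) x) =
      c • vecI Ih (fun x => (1 + x) ^ i • ψ x) := fun i => by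
    rw [← vecI_smul]
    congr 1
    ext x : 1
    exact smul_comm ((1 + x) ^ i) c (ψ x)
  simp only [refNormMap, iteratedDeriv_const_smul_field, hmoment, norm_smul, Real.norm_eq_abs,
    ← Finset.mul_sum]
  ring

theorem refNormMap_add_le {ψ χ : ℝ → Vec d} (hψ : ContDiff ℝ ∞ ψ) (hχ : ContDiff ℝ ∞ χ) :
    refNormMap d Ih r k (ψ + χ) ≤ refNormMap d Ih r k ψ + refNormMap d Ih r k χ := by
  have hderiv : ∀ (i : ℕ) (x : ℝ),
      iteratedDeriv i (ψ + χ) x = iteratedDeriv i ψ x + iteratedDeriv i χ x := fun i x =>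
    iteratedDeriv_add (hψ.of_le (mod_cast le_top)).contDiffAt
      (hχ.of_le (mod_cast le_top)).contDiffAt
  have hmoment : ∀ i : ℕ, vecI Ih (fun x => (1 + x) ^ i • (ψ + χ) x) =
      vecI Ih (fun x => (1 + x) ^ i • ψ x) + vecI Ih (fun x => (1 + x) ^ i • χ x) := fun i => by
    rw [← vecI_add]
    congr 1
    ext x : 1
    exact smul_add _ _ _
  have hsum {ι : Type} (s : Finset ι) (f g : ι → Vec d) :
      ∑ i ∈ s, ‖f i + g i‖ ≤ ∑ i ∈ s, ‖f i‖ + ∑ i ∈ s, ‖g i‖ :=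
    (Finset.sum_le_sum fun _ _ => norm_add_le _ _).trans_eq Finset.sum_add_distrib
  simp only [refNormMap, hderiv, hmoment]
  linarith [hsum (Finset.range ((k - 1).fdiv 2).toNat) (iteratedDeriv · ψ (-1))
    (iteratedDeriv · χ (-1)), hsum (Finset.range (k.fdiv 2).toNat) (iteratedDeriv · ψ 1)
    (iteratedDeriv · χ 1), hsum (Finset.Icc (if k = 0 then 1 else 0) (r - k).toNat)
    (fun i => vecI Ih (fun x => (1 + x) ^ i • ψ x)) (fun i => vecI Ih (fun x => (1 + x) ^ i • χ x))]

theorem refNormMap_eq_zero (hr : 1 ≤ r) (h0k : 0 ≤ k) (hkr : k ≤ r) (hA1 : AssumptionA1 Ih r k)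
    {ψ : ℝ → Vec d} (hψ : IsPolyV (r - 1) ψ) (h0 : refNormMap d Ih r k ψ = 0) : ψ = 0 := by
  simp only [refNormMap] at h0
  rw [add_eq_zero_iff_of_nonneg (by positivity) (by positivity),
    add_eq_zero_iff_of_nonneg (by positivity) (by positivity),
    Finset.sum_eq_zero_iff_of_nonneg (fun _ _ => norm_nonneg _),
    Finset.sum_eq_zero_iff_of_nonneg (fun _ _ => norm_nonneg _),
    Finset.sum_eq_zero_iff_of_nonneg (fun _ _ => norm_nonneg _)] at h0
  obtain ⟨⟨hleft, hright⟩, hmoments⟩ := h0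
  ext x j
  have hψj := hψ j
  rw [← Int.toNat_of_nonneg (sub_nonneg.mpr hr)] at hψj
  obtain ⟨p, hdeg, hp⟩ := isPolyR_natCast_iff.mp hψj
  have hderiv : ∀ (i : ℕ) (y : ℝ), iteratedDeriv i ψ y j = (derivative^[i] p).eval y := by
    intro i y
    rw [EuclideanSpace.iteratedDeriv_apply hψ.contDiff.contDiffAt, funext hp, p.iteratedDeriv_eval]
  have hmoment : ∀ i : ℕ, vecI Ih (fun x => (1 + x) ^ i • ψ x) j =
      Ih (fun x => (1 + x) ^ i * p.eval x) := by
    simp [vecI, hp]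
  rw [hp, eq_zero_of_assumptionA1 hr h0k hkr hA1 hdeg (fun i hi => ?_) (fun i hi => ?_)
    (fun i hi => ?_), eval_zero]
  · rfl
  · rw [← hderiv, norm_eq_zero.mp (hleft i (Finset.mem_range.mpr hi)), PiLp.zero_apply]
  · rw [← hderiv, norm_eq_zero.mp (hright i (Finset.mem_range.mpr hi)), PiLp.zero_apply]
  · rw [← hmoment, norm_eq_zero.mp (hmoments i hi), PiLp.zero_apply]

end refNormMap

/-- Lemma 3.2: the mapping `refNormMap` defines a norm on
`P_{r-1}([-1,1], ℝ^d)`. -/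
theorem stmt_1 (d : ℕ) (r k : ℤ) (hr : 1 ≤ r) (h0k : 0 ≤ k) (hkr : k ≤ r)
    (Ih : (ℝ → ℝ) →ₗ[ℝ] ℝ) (hA1 : AssumptionA1 Ih r k) :
    (∀ ψ : ℝ → Vec d, IsPolyV (r - 1) ψ → 0 ≤ refNormMap d Ih r k ψ) ∧
    (∀ (c : ℝ) (ψ : ℝ → Vec d), IsPolyV (r - 1) ψ →
      refNormMap d Ih r k (c • ψ) = |c| * refNormMap d Ih r k ψ) ∧
    (∀ ψ χ : ℝ → Vec d, IsPolyV (r - 1) ψ → IsPolyV (r - 1) χ →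
      refNormMap d Ih r k (ψ + χ) ≤ refNormMap d Ih r k ψ + refNormMap d Ih r k χ) ∧
    (∀ ψ : ℝ → Vec d, IsPolyV (r - 1) ψ → refNormMap d Ih r k ψ = 0 → ∀ x, ψ x = 0) :=
  ⟨fun ψ _ => refNormMap_nonneg ψ, fun c ψ _ => refNormMap_smul c ψ,
    fun _ _ hψ hχ => refNormMap_add_le hψ.contDiff hχ.contDiff,
    fun _ hψ h0 => congrFun (refNormMap_eq_zero hr h0k hkr hA1 hψ h0)⟩

end
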